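/- Let x_1, …, x_n ∈ ℝ^d, let p ∈ ℝ^n with p_k ≥ 0 and ∑_k p_k = 1, let x̄ = ∑_k p_k x_k, let t = softmax(x̄), and fix a label index m ∈ Fin d. Suppose i, j are indices such that softmax(x̄) = softmax(x_j) (exact version of the paper's assumption that the KL divergence between them is approximately zero) and the cross-entropy ordering −ln(softmax(x_i)_m) ≤ −ln(softmax(x_j)_m) holds. Then ⟨t − e_m, x_i⟩ ≤ ⟨t − e_m, x_j⟩, where e_m is the m-th standard basis vector; i.e., the loss gradient with respect to the mixing weight of operation i is at most that of operation j. (Exact form of Theorem 4.1 of the paper.) -/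

import Mathlib

/-
Write `LSE v = log ∑ l, exp (v l)`. Under `softmax x̄ = softmax x_j` the claim reads `⟨softmax x_j, x_i - x_j⟩ ≤ x_i m - x_j m`.
The left side is at most `LSE x_i - LSE x_j` by convexity of log-sum-exp (whose gradient at
`v` is `softmax v`), and since the cross entropy is `-log (softmax v)_m = LSE v - v_m`, the
cross-entropy ordering says exactly `LSE x_i - LSE x_j ≤ x_i m - x_j m`.
-/

/-- Softmax of a vector `v : ℝ^d`: `softmax(v)_l = exp(v_l) / ∑_{l'} exp(v_{l'})`. -/
noncomputable def softmax {d : ℕ} (v : Fin d → ℝ) : Fin d → ℝ :=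
  fun l => Real.exp (v l) / ∑ l', Real.exp (v l')

open Finset Real

namespace Softmax

variable {d : ℕ}

lemma sum_exp_pos [Nonempty (Fin d)] (v : Fin d → ℝ) : 0 < ∑ l, exp (v l) :=
  sum_pos (fun l _ => exp_pos (v l)) univ_nonempty

lemma softmax_nonneg (v : Fin d → ℝ) (l : Fin d) : 0 ≤ softmax v l :=
  div_nonneg (exp_pos _).le (sum_nonneg fun l' _ => (exp_pos (v l')).le)

lemma sum_softmax [Nonempty (Fin d)] (v : Fin d → ℝ) : ∑ l, softmax v l = 1 := by
  simp only [softmax, ← sum_div]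
  exact div_self (sum_exp_pos v).ne'

lemma neg_log_softmax (v : Fin d → ℝ) (m : Fin d) :
    -log (softmax v m) = log (∑ l, exp (v l)) - v m := by
  have : Nonempty (Fin d) := ⟨m⟩
  rw [softmax, log_div (exp_pos _).ne' (sum_exp_pos v).ne', log_exp]
  ring

/-- Jensen for `log` with weights `softmax v` at the points `exp (u l - v l)`,
whose weighted mean is `∑ exp u / ∑ exp v`. -/
lemma sum_softmax_mul_sub_le [Nonempty (Fin d)] (u v : Fin d → ℝ) :
    ∑ l, softmax v l * (u l - v l) ≤ log (∑ l, exp (u l)) - log (∑ l, exp (v l)) := by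
  have jensen := strictConcaveOn_log_Ioi.concaveOn.le_map_sum (t := univ)
    (fun l _ => softmax_nonneg v l) (sum_softmax v)
    (fun l _ => Set.mem_Ioi.mpr (exp_pos (u l - v l)))
  have mean : ∑ l, softmax v l • exp (u l - v l) = (∑ l, exp (u l)) / ∑ l, exp (v l) := by
    rw [sum_div]
    refine sum_congr rfl fun l _ => ?_
    rw [smul_eq_mul, softmax, exp_sub]
    field_simp
  rw [mean] at jensen
  simp only [log_exp, smul_eq_mul] at jensen
  rwa [log_div (sum_exp_pos u).ne' (sum_exp_pos v).ne'] at jensen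

end Softmax

lemma sum_sub_ite_mul {d : ℕ} (s w : Fin d → ℝ) (m : Fin d) :
    ∑ l, (s l - if l = m then 1 else 0) * w l = ∑ l, s l * w l - w m := by
  simp only [sub_mul, sum_sub_distrib, ite_mul, one_mul, zero_mul, sum_ite_eq', mem_univ,
    if_true]

open Softmax in
theorem gradient_ordering_of_crossEntropy_ordering_general
    {n d : ℕ} (x : Fin n → Fin d → ℝ) (p : Fin n → ℝ)
    (m : Fin d) (i j : Fin n)
    (hkl : softmax (∑ k, p k • x k) = softmax (x j))
    (hce : -Real.log (softmax (x i) m) ≤ -Real.log (softmax (x j) m)) :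
    ∑ l, (softmax (∑ k, p k • x k) l - (if l = m then 1 else 0)) * x i l ≤
      ∑ l, (softmax (∑ k, p k • x k) l - (if l = m then 1 else 0)) * x j l := by
  have : Nonempty (Fin d) := ⟨m⟩
  rw [hkl, sum_sub_ite_mul, sum_sub_ite_mul]
  rw [neg_log_softmax, neg_log_softmax] at hce
  have convexity := sum_softmax_mul_sub_le (x i) (x j)
  simp only [mul_sub, sum_sub_distrib] at convexity
  linarith

/-- Theorem 4.1 (exact form): if `softmax(x̄) = softmax(x_j)` and operation `i`
has smaller cross-entropy loss than operation `j`, then the loss gradient with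
respect to `p_i` (namely `⟨softmax(x̄) − e_m, x_i⟩`) is at most that for `p_j`. -/
theorem gradient_ordering_of_crossEntropy_ordering
    {n d : ℕ} (x : Fin n → Fin d → ℝ) (p : Fin n → ℝ)
    (hp0 : ∀ k, 0 ≤ p k) (hp1 : ∑ k, p k = 1) (m : Fin d) (i j : Fin n)
    (hkl : softmax (∑ k, p k • x k) = softmax (x j))
    (hce : -Real.log (softmax (x i) m) ≤ -Real.log (softmax (x j) m)) :
    ∑ l, (softmax (∑ k, p k • x k) l - (if l = m then 1 else 0)) * x i l ≤
      ∑ l, (softmax (∑ k, p k • x k) l - (if l = m then 1 else 0)) * x j l :=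
  gradient_ordering_of_crossEntropy_ordering_general x p m i j hkl hce
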